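/- arXiv:1212.5438 — 4 statements merged into one kernel-verified Lean document; each statement's English description precedes it below -/
import Mathlib

section
/- Let K ⊆ H be a closed convex cone and C ⊆ H a closed convex set in a real Hilbert space H. Define operations x ∧_K y = P_{x−K}(y) and x ∨_K y = P_{x+K}(y), and similarly for L = K*: x ∧_L y = P_{x−L}(y), x ∨_L y = P_{x+L}(y). Then C is invariant under all four operations ∧_K, ∨_K, ∧_L, ∨_L (i.e., x, y ∈ C implies x ∧_K y, x ∨_K y, x ∧_L y, x ∨_L y ∈ C) if and only if the metric projection P_C is K-isotone (i.e., y − x ∈ K implies P_C(y) − P_C(x) ∈ K). -/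
open RealInnerProductSpace

variable {H : Type*} [NormedAddCommGroup H] [InnerProductSpace ℝ H] [CompleteSpace H]

/-- `K` is a closed convex cone (containing `0`). -/
def IsClosedConvexCone (K : Set H) : Prop :=
  IsClosed K ∧ (0 : H) ∈ K ∧ (∀ x ∈ K, ∀ y ∈ K, x + y ∈ K) ∧
    ∀ x ∈ K, ∀ t : ℝ, 0 ≤ t → t • x ∈ K

/-- The dual cone of a set. -/
def dualSet (K : Set H) : Set H := {y | ∀ x ∈ K, 0 ≤ ⟪x, y⟫}

/-- `P` is the metric projection onto `D`. -/
def IsMetricProj (D : Set H) (P : H → H) : Prop :=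
  ∀ x, P x ∈ D ∧ ∀ y ∈ D, ‖x - P x‖ ≤ ‖x - y‖

/-- The translate `x - K`. -/
def meetSet (K : Set H) (x : H) : Set H := {z | ∃ k ∈ K, z = x - k}

/-- The translate `x + K`. -/
def joinSet (K : Set H) (x : H) : Set H := {z | ∃ k ∈ K, z = x + k}

/-!
For a closed convex cone `M`, the projection `z` of `v` onto `u - M` is characterised by
`u - z ∈ M`, `v - z ∈ M*` and `⟪v - z, u - z⟫ = 0`. Since `M ⊆ M**`, this makes the roles of
`u` and `v` symmetric: `P_{x - K*} y = P_{y - K} x`, and, combined with the point reflection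
`P_{u - M} v + P_{v + M} u = u + v`, also `P_{x + K*} y = P_{y + K} x`.

If `P_C` is isotone, `x, y ∈ C` and `z = P_{x - K} y`, then `P_C z ∈ x - K`, and the
variational inequalities of the two projections squeeze `z = P_C z ∈ C`; the `L`-operations
reduce to the `K`-ones by the symmetry above. Conversely, let `u = P_C x`, `v = P_C y` with
`y - x ∈ K` and `z = u ∧_L v = P_{v - K} u`. Invariance puts `z` and `u + v - z = v ∨_L u` in
`C`; testing the variational inequalities of `u` and `v` against them and using
`u - z ∈ L`, `⟪u - z, v - z⟫ = 0` gives `‖u - z‖² ≤ 0`, hence `v - u = v - z ∈ K`.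
-/

section

variable {E : Type*} [NormedAddCommGroup E]

lemma mem_meetSet {M : Set E} {x z : E} : z ∈ meetSet M x ↔ x - z ∈ M := by
  constructor
  · rintro ⟨m, hm, rfl⟩
    simpa using hm
  · exact fun h => ⟨x - z, h, by abel⟩

lemma mem_joinSet {M : Set E} {x z : E} : z ∈ joinSet M x ↔ z - x ∈ M := by
  constructor
  · rintro ⟨m, hm, rfl⟩
    simpa using hm
  · exact fun h => ⟨z - x, h, by abel⟩

lemma meetSet_eq_preimage (M : Set E) (x : E) : meetSet M x = (x - ·) ⁻¹' M :=
  Set.ext fun _ => mem_meetSet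

lemma joinSet_eq_preimage (M : Set E) (x : E) : joinSet M x = (· - x) ⁻¹' M :=
  Set.ext fun _ => mem_joinSet

lemma IsClosed.meetSet {M : Set E} (hM : IsClosed M) (x : E) : IsClosed (meetSet M x) :=
  meetSet_eq_preimage M x ▸ hM.preimage (by fun_prop)

lemma IsClosed.joinSet {M : Set E} (hM : IsClosed M) (x : E) : IsClosed (joinSet M x) :=
  joinSet_eq_preimage M x ▸ hM.preimage (by fun_prop)

variable [InnerProductSpace ℝ E]

lemma Convex.meetSet {M : Set E} (hM : Convex ℝ M) (x : E) : Convex ℝ (meetSet M x) := by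
  rw [meetSet_eq_preimage]
  simpa [Set.preimage_preimage, sub_eq_add_neg] using
    (hM.translate_preimage_right x).linear_preimage (-LinearMap.id)

lemma Convex.joinSet {M : Set E} (hM : Convex ℝ M) (x : E) : Convex ℝ (joinSet M x) := by
  rw [joinSet_eq_preimage]
  simpa only [sub_eq_add_neg] using hM.translate_preimage_left (-x)

lemma IsClosedConvexCone.convex {K : Set E} (hK : IsClosedConvexCone K) : Convex ℝ K :=
  fun _ hx _ hy a b ha hb _ => hK.2.2.1 _ (hK.2.2.2 _ hx a ha) _ (hK.2.2.2 _ hy b hb)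

lemma isClosedConvexCone_dualSet (K : Set E) : IsClosedConvexCone (dualSet K) := by
  refine ⟨?_, fun x _ => by simp, fun a ha b hb x hx => ?_, fun a ha t ht x hx => ?_⟩
  · simp only [dualSet, Set.ofPred_forall]
    exact isClosed_iInter fun x => isClosed_iInter fun _ =>
      isClosed_le continuous_const (continuous_const.inner continuous_id)
  · rw [inner_add_right]
    exact add_nonneg (ha x hx) (hb x hx)
  · rw [real_inner_smul_right]
    exact mul_nonneg ht (ha x hx)

lemma subset_dualSet_dualSet (K : Set E) : K ⊆ dualSet (dualSet K) :=
  fun x hx y hy => real_inner_comm x y ▸ hy x hx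

namespace IsMetricProj

variable {D : Set E} {Q : E → E}

lemma inner_sub_apply_nonpos (hQ : IsMetricProj D Q) (hD : Convex ℝ D) (u : E) {w : E}
    (hw : w ∈ D) : ⟪u - Q u, w - Q u⟫ ≤ 0 := by
  obtain ⟨hQu, hmin⟩ := hQ u
  have : Nonempty D := ⟨⟨Q u, hQu⟩⟩
  have hbdd : BddBelow (Set.range fun w : D => ‖u - w‖) :=
    ⟨0, by rintro _ ⟨w, rfl⟩; exact norm_nonneg _⟩
  refine (norm_eq_iInf_iff_real_inner_le_zero hD hQu).1 ?_ w hw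
  exact le_antisymm (le_ciInf fun w => hmin w w.2) (ciInf_le hbdd ⟨Q u, hQu⟩)

lemma apply_eq_of_inner_nonpos (hQ : IsMetricProj D Q) {u p : E} (hp : p ∈ D)
    (h : ∀ w ∈ D, ⟪u - p, w - p⟫ ≤ 0) : Q u = p := by
  have hmin := (hQ u).2 p hp
  have hvar := h (Q u) (hQ u).1
  have hexp : ‖u - Q u‖ ^ 2 = ‖u - p‖ ^ 2 - 2 * ⟪u - p, Q u - p⟫ + ‖Q u - p‖ ^ 2 := by
    rw [← norm_sub_sq_real]
    congr 2
    abel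
  have : ‖Q u - p‖ ^ 2 ≤ 0 := by nlinarith [norm_nonneg (u - Q u)]
  exact norm_sub_eq_zero_iff.1 (pow_eq_zero_iff two_ne_zero |>.1 (le_antisymm this (sq_nonneg _)))

lemma apply_eq_self (hQ : IsMetricProj D Q) {x : E} (hx : x ∈ D) : Q x = x :=
  hQ.apply_eq_of_inner_nonpos hx fun w _ => by simp

lemma apply_mem_of_apply_apply_mem {A B : Set E} {QA QB : E → E} (hQA : IsMetricProj A QA)
    (hA : Convex ℝ A) (hQB : IsMetricProj B QB) (hB : Convex ℝ B) {y : E} (hy : y ∈ B)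
    (h : QB (QA y) ∈ A) : QA y ∈ B := by
  set z := QA y
  set w := QB z
  have hz := hQA.inner_sub_apply_nonpos hA y h
  have hw := hQB.inner_sub_apply_nonpos hB z hy
  have : ⟪z - w, z - w⟫ ≤ 0 := by
    have e : ⟪z - w, z - w⟫ = ⟪y - z, w - z⟫ + ⟪z - w, y - w⟫ := by
      rw [← neg_sub z y, ← neg_sub z w, inner_neg_neg, real_inner_comm (z - w) (z - y),
        ← inner_add_right]
      congr 1
      abel
    linarith
  rw [sub_eq_zero.1 (real_inner_self_nonpos.1 this)]
  exact (hQB z).1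

lemma meetSet_apply_eq_iff {M : Set E} (hM : IsClosedConvexCone M) {u : E}
    (hQ : IsMetricProj (meetSet M u) Q) {v z : E} :
    Q v = z ↔ u - z ∈ M ∧ v - z ∈ dualSet M ∧ ⟪v - z, u - z⟫ = 0 := by
  constructor
  · rintro rfl
    have hmem : u - Q v ∈ M := mem_meetSet.1 (hQ v).1
    have hvar : ∀ m ∈ M, ⟪v - Q v, (u - m) - Q v⟫ ≤ 0 := fun m hm =>
      hQ.inner_sub_apply_nonpos (hM.convex.meetSet u) v (mem_meetSet.2 (by simpa using hm))
    have hdual : v - Q v ∈ dualSet M := by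
      intro m hm
      have := hvar _ (hM.2.2.1 _ hmem _ hm)
      rw [show u - (u - Q v + m) - Q v = -m by abel, inner_neg_right, real_inner_comm] at this
      linarith
    refine ⟨hmem, hdual, le_antisymm ?_ ?_⟩
    · simpa using hvar 0 hM.2.1
    · exact real_inner_comm (u - Q v) (v - Q v) ▸ hdual _ hmem
  · rintro ⟨hz, hdual, horth⟩
    refine hQ.apply_eq_of_inner_nonpos (mem_meetSet.2 hz) fun w hw => ?_
    rw [show w - z = (u - z) - (u - w) by abel, inner_sub_right, horth, real_inner_comm]
    linarith [hdual _ (mem_meetSet.1 hw)]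

lemma meetSet_apply_add_joinSet_apply {M : Set E} (hM : Convex ℝ M) {u v : E} {Q₁ Q₂ : E → E}
    (h₁ : IsMetricProj (meetSet M u) Q₁) (h₂ : IsMetricProj (joinSet M v) Q₂) :
    Q₁ v + Q₂ u = u + v := by
  suffices Q₂ u = u + v - Q₁ v by rw [this]; abel
  refine h₂.apply_eq_of_inner_nonpos (mem_joinSet.2 ?_) fun w hw => ?_
  · rw [show u + v - Q₁ v - v = u - Q₁ v by abel]
    exact mem_meetSet.1 (h₁ v).1
  · have hw' : u + v - w ∈ meetSet M u := by
      rw [mem_meetSet, show u - (u + v - w) = w - v by abel]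
      exact mem_joinSet.1 hw
    convert h₁.inner_sub_apply_nonpos (hM.meetSet u) v hw' using 1
    rw [← inner_neg_neg]
    congr 1 <;> abel

lemma meetSet_apply_mem_of_isotone {K C : Set E} {x : E} {QC : E → E}
    (hQ : IsMetricProj (meetSet K x) Q) (hK : Convex ℝ K) (hC : IsMetricProj C QC)
    (hCcv : Convex ℝ C) (hiso : ∀ x y, y - x ∈ K → QC y - QC x ∈ K) (hx : x ∈ C) {y : E}
    (hy : y ∈ C) : Q y ∈ C := by
  refine hQ.apply_mem_of_apply_apply_mem (hK.meetSet x) hC hCcv hy ?_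
  have := hiso _ _ (mem_meetSet.1 (hQ y).1)
  rwa [hC.apply_eq_self hx, ← mem_meetSet] at this

lemma joinSet_apply_mem_of_isotone {K C : Set E} {x : E} {QC : E → E}
    (hQ : IsMetricProj (joinSet K x) Q) (hK : Convex ℝ K) (hC : IsMetricProj C QC)
    (hCcv : Convex ℝ C) (hiso : ∀ x y, y - x ∈ K → QC y - QC x ∈ K) (hx : x ∈ C) {y : E}
    (hy : y ∈ C) : Q y ∈ C := by
  refine hQ.apply_mem_of_apply_apply_mem (hK.joinSet x) hC hCcv hy ?_
  have := hiso _ _ (mem_joinSet.1 (hQ y).1)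
  rwa [hC.apply_eq_self hx, ← mem_joinSet] at this

end IsMetricProj

def IsMetricProjFamily (P : Set E → E → E) : Prop :=
  ∀ D : Set E, D.Nonempty → IsClosed D → Convex ℝ D → IsMetricProj D (P D)

namespace IsMetricProjFamily

variable {P : Set E → E → E} {K M : Set E}

lemma isMetricProj_meetSet (hP : IsMetricProjFamily P) (hM : IsClosedConvexCone M) (x : E) :
    IsMetricProj (meetSet M x) (P (meetSet M x)) :=
  hP _ ⟨x, mem_meetSet.2 (by simpa using hM.2.1)⟩ (hM.1.meetSet x) (hM.convex.meetSet x)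

lemma isMetricProj_joinSet (hP : IsMetricProjFamily P) (hM : IsClosedConvexCone M) (x : E) :
    IsMetricProj (joinSet M x) (P (joinSet M x)) :=
  hP _ ⟨x, mem_joinSet.2 (by simpa using hM.2.1)⟩ (hM.1.joinSet x) (hM.convex.joinSet x)

lemma meetSet_dualSet_apply (hP : IsMetricProjFamily P) (hK : IsClosedConvexCone K) (x y : E) :
    P (meetSet (dualSet K) x) y = P (meetSet K y) x := by
  obtain ⟨hyz, hxz, horth⟩ := ((hP.isMetricProj_meetSet hK y).meetSet_apply_eq_iff hK).1 rfl
  refine ((hP.isMetricProj_meetSet (isClosedConvexCone_dualSet K) x).meetSet_apply_eq_iff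
    (isClosedConvexCone_dualSet K)).2 ⟨hxz, subset_dualSet_dualSet K hyz, ?_⟩
  rwa [real_inner_comm]

lemma joinSet_dualSet_apply (hP : IsMetricProjFamily P) (hK : IsClosedConvexCone K) (x y : E) :
    P (joinSet (dualSet K) x) y = P (joinSet K y) x := by
  have hL := isClosedConvexCone_dualSet K
  have hmjL := (hP.isMetricProj_meetSet hL y).meetSet_apply_add_joinSet_apply hL.convex
    (hP.isMetricProj_joinSet hL x)
  have hmjK := (hP.isMetricProj_meetSet hK x).meetSet_apply_add_joinSet_apply hK.convex
    (hP.isMetricProj_joinSet hK y)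
  rw [hP.meetSet_dualSet_apply hK] at hmjL
  rw [add_comm x y] at hmjK
  exact add_left_cancel (hmjL.trans hmjK.symm)

lemma isotone_of_dualSet_invariant (hP : IsMetricProjFamily P) (hK : IsClosedConvexCone K)
    {C : Set E} (hC : IsMetricProj C (P C)) (hCcv : Convex ℝ C)
    (hmeet : ∀ x ∈ C, ∀ y ∈ C, P (meetSet (dualSet K) x) y ∈ C)
    (hjoin : ∀ x ∈ C, ∀ y ∈ C, P (joinSet (dualSet K) x) y ∈ C) {x y : E} (hxy : y - x ∈ K) :
    P C y - P C x ∈ K := by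
  set u := P C x
  set v := P C y
  have hu : u ∈ C := (hC x).1
  have hv : v ∈ C := (hC y).1
  set z := P (meetSet K v) u
  obtain ⟨hvz, huz, horth⟩ := ((hP.isMetricProj_meetSet hK v).meetSet_apply_eq_iff hK).1 rfl
  have hmeet_eq : P (meetSet (dualSet K) u) v = z := hP.meetSet_dualSet_apply hK u v
  have hjoin_eq : P (joinSet (dualSet K) v) u = u + v - z := by
    have hL := isClosedConvexCone_dualSet K
    rw [eq_sub_iff_add_eq', ← hmeet_eq]
    exact (hP.isMetricProj_meetSet hL u).meetSet_apply_add_joinSet_apply hL.convex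
      (hP.isMetricProj_joinSet hL v)
  have hx_u : 0 ≤ ⟪x - u, u - z⟫ := by
    have := hC.inner_sub_apply_nonpos hCcv x (hmeet_eq ▸ hmeet u hu v hv)
    rwa [← neg_sub u z, inner_neg_right, neg_nonpos] at this
  have hy_v : ⟪y - v, u - z⟫ ≤ 0 := by
    have := hC.inner_sub_apply_nonpos hCcv y (hjoin_eq ▸ hjoin v hv u hu)
    rwa [show u + v - z - v = u - z by abel] at this
  have hyx : 0 ≤ ⟪y - x, u - z⟫ := huz _ hxy
  have hzu : z = u := by
    have : ⟪u - z, u - z⟫ ≤ 0 := by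
      have e : u - z = (v - z) + (y - v) - (x - u) - (y - x) := by abel
      nth_rw 1 [e]
      rw [inner_sub_left, inner_sub_left, inner_add_left, real_inner_comm (u - z) (v - z), horth]
      linarith
    exact (sub_eq_zero.1 (real_inner_self_nonpos.1 this)).symm
  rwa [← hzu]

end IsMetricProjFamily

end

theorem invariant_iff_isotone (K : Set H) (hK : IsClosedConvexCone K)
    (L : Set H) (hL : L = dualSet K)
    (C : Set H) (hCne : C.Nonempty) (hCcl : IsClosed C) (hCcv : Convex ℝ C)
    (P : Set H → H → H)
    (hP : ∀ D : Set H, D.Nonempty → IsClosed D → Convex ℝ D → IsMetricProj D (P D)) :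
    (∀ x ∈ C, ∀ y ∈ C,
        P (meetSet K x) y ∈ C ∧ P (joinSet K x) y ∈ C ∧
        P (meetSet L x) y ∈ C ∧ P (joinSet L x) y ∈ C) ↔
      (∀ x y : H, y - x ∈ K → P C y - P C x ∈ K) := by
  subst hL
  have hC : IsMetricProj C (P C) := hP C hCne hCcl hCcv
  replace hP : IsMetricProjFamily P := hP
  constructor
  · intro hinv x y hxy
    exact hP.isotone_of_dualSet_invariant hK hC hCcv (fun x hx y hy => (hinv x hx y hy).2.2.1)
      (fun x hx y hy => (hinv x hx y hy).2.2.2) hxy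
  · intro hiso x hx y hy
    have hmeet : ∀ {x y}, x ∈ C → y ∈ C → P (meetSet K x) y ∈ C := fun hx hy =>
      (hP.isMetricProj_meetSet hK _).meetSet_apply_mem_of_isotone hK.convex hC hCcv hiso hx hy
    have hjoin : ∀ {x y}, x ∈ C → y ∈ C → P (joinSet K x) y ∈ C := fun hx hy =>
      (hP.isMetricProj_joinSet hK _).joinSet_apply_mem_of_isotone hK.convex hC hCcv hiso hx hy
    refine ⟨hmeet hx hy, hjoin hx hy, ?_, ?_⟩
    · exact hP.meetSet_dualSet_apply hK x y ▸ hmeet hy hx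
    · exact hP.joinSet_dualSet_apply hK x y ▸ hjoin hy hx
end

section
/- Let K and L be mutually dual closed convex cones in a real Hilbert space H. If P_K is L-isotone, then P_K is L-subadditive: for all x, y ∈ H, P_K(x) + P_K(y) − P_K(x + y) ∈ L. -/
open RealInnerProductSpace

variable {H : Type*} [NormedAddCommGroup H] [InnerProductSpace ℝ H] [CompleteSpace H]

/-!
`P_K x - x` lies in the dual cone `L = K*`: this is the variational inequality `⟪k, x - P_K x⟫ ≤ 0`
for `k ∈ K`, obtained by comparing `P_K x` with the points `P_K x + t • k ∈ K`. Hence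
`x + y ≤_L P_K x + P_K y`, and since `P_K x + P_K y ∈ K` is fixed by `P_K`, isotonicity gives
`P_K (x + y) ≤_L P_K x + P_K y`.
-/

section

omit [CompleteSpace H]

open Filter Topology

omit [InnerProductSpace ℝ H] in
theorem IsMetricProj.apply_eq_self_s7 {D : Set H} {P : H → H} (hP : IsMetricProj D P) {z : H}
    (hz : z ∈ D) : P z = z := by
  have h := (hP z).2 z hz
  rw [sub_self, norm_zero, norm_le_zero_iff, sub_eq_zero] at h
  exact h.symm

theorem IsMetricProj.inner_le_zero_of_ray_mem {D : Set H} {P : H → H} (hP : IsMetricProj D P)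
    (x v : H) (hray : ∀ t : ℝ, 0 < t → P x + t • v ∈ D) : ⟪v, x - P x⟫ ≤ 0 := by
  have key : ∀ t : ℝ, 0 < t → 2 * ⟪v, x - P x⟫ ≤ t * ‖v‖ ^ 2 := by
    intro t ht
    have hle : ‖x - P x‖ ^ 2 ≤ ‖x - P x - t • v‖ ^ 2 := by
      rw [sub_sub]
      exact pow_le_pow_left₀ (norm_nonneg _) ((hP x).2 _ (hray t ht)) 2
    rw [norm_sub_sq_real (x - P x), real_inner_smul_right, norm_smul, mul_pow, Real.norm_eq_abs,
      sq_abs, real_inner_comm] at hle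
    nlinarith
  have hlim : Tendsto (fun t : ℝ => t * ‖v‖ ^ 2) (𝓝[>] 0) (𝓝 0) := by
    have := (tendsto_id (x := 𝓝 (0 : ℝ))).mul_const (‖v‖ ^ 2)
    rw [zero_mul] at this
    exact this.mono_left nhdsWithin_le_nhds
  have := ge_of_tendsto hlim (eventually_nhdsWithin_of_forall key)
  linarith

theorem IsMetricProj.apply_sub_mem_dualSet {K : Set H} (hK : IsClosedConvexCone K) {P : H → H}
    (hP : IsMetricProj K P) (x : H) : P x - x ∈ dualSet K := by
  intro k hk
  have hray : ∀ t : ℝ, 0 < t → P x + t • k ∈ K := fun t ht =>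
    hK.2.2.1 _ (hP x).1 _ (hK.2.2.2 k hk t ht.le)
  rw [← neg_sub, inner_neg_right, neg_nonneg]
  exact hP.inner_le_zero_of_ray_mem x k hray

theorem add_mem_dualSet {K : Set H} {u v : H} (hu : u ∈ dualSet K) (hv : v ∈ dualSet K) :
    u + v ∈ dualSet K := fun k hk => by
  rw [inner_add_right]
  exact add_nonneg (hu k hk) (hv k hk)

end

theorem L_isotone_implies_L_subadditive_general (K L : Set H) (hK : IsClosedConvexCone K)
    (hL : L = dualSet K)
    (PK : H → H) (hPK : IsMetricProj K PK)
    (hiso : ∀ u v : H, v - u ∈ L → PK v - PK u ∈ L) :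
    ∀ x y : H, PK x + PK y - PK (x + y) ∈ L := by
  intro x y
  have hsum_mem : PK x + PK y ∈ K := hK.2.2.1 _ (hPK x).1 _ (hPK y).1
  have hsum_ge : PK x + PK y - (x + y) ∈ L := by
    rw [hL, add_sub_add_comm]
    exact add_mem_dualSet (hPK.apply_sub_mem_dualSet hK x) (hPK.apply_sub_mem_dualSet hK y)
  simpa only [hPK.apply_eq_self_s7 hsum_mem] using hiso _ _ hsum_ge

theorem L_isotone_implies_L_subadditive (K L : Set H) (hK : IsClosedConvexCone K)
    (hL : L = dualSet K) (hKL : K = dualSet L)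
    (PK : H → H) (hPK : IsMetricProj K PK)
    (hiso : ∀ u v : H, v - u ∈ L → PK v - PK u ∈ L) :
    ∀ x y : H, PK x + PK y - PK (x + y) ∈ L :=
  L_isotone_implies_L_subadditive_general K L hK hL PK hPK hiso
end

section
/- Let K and L be mutually dual closed convex cones in a real Hilbert space H. If P_L is L-subadditive (P_L(u) + P_L(v) − P_L(u+v) ∈ L for all u, v), then P_K is L-isotone (y − x ∈ L implies P_K(y) − P_K(x) ∈ L). -/
set_option linter.unusedSectionVars false
open RealInnerProductSpace

variable {H : Type*} [NormedAddCommGroup H] [InnerProductSpace ℝ H] [CompleteSpace H]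

/-- The dual set is convex. -/
lemma dualSet_convex (K : Set H) : Convex ℝ (dualSet K) := by
  intro a ha b hb s t hs ht _
  intro x hx
  have h1 := ha x hx
  have h2 := hb x hx
  rw [inner_add_right, real_inner_smul_right, real_inner_smul_right]
  positivity

lemma dualSet_smul (K : Set H) {z : H} (hz : z ∈ dualSet K) {t : ℝ} (ht : 0 ≤ t) :
    t • z ∈ dualSet K := by
  intro x hx
  rw [real_inner_smul_right]
  exact mul_nonneg ht (hz x hx)

lemma dualSet_zero (K : Set H) : (0 : H) ∈ dualSet K := by
  intro x hx; simp

/-- Variational inequality for the metric projection onto a convex set. -/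
lemma proj_var_ineq {D : Set H} (hD : Convex ℝ D) {P : H → H} (hP : IsMetricProj D P)
    (x : H) : ∀ w ∈ D, ⟪x - P x, w - P x⟫ ≤ 0 := by
  have hPx := (hP x).1
  have hle := (hP x).2
  haveI : Nonempty D := ⟨⟨P x, hPx⟩⟩
  have : ‖x - P x‖ = ⨅ w : D, ‖x - w‖ := by
    refine le_antisymm (le_ciInf fun w => hle w w.2) ?_
    exact ciInf_le ⟨0, fun _ ⟨_, h⟩ => h ▸ norm_nonneg _⟩ (⟨P x, hPx⟩ : D)
  exact (norm_eq_iInf_iff_real_inner_le_zero hD hPx).mp this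

/-- Uniqueness: a point satisfying the variational inequality is the projection. -/
lemma proj_unique {D : Set H} (hD : Convex ℝ D) {P : H → H} (hP : IsMetricProj D P)
    (x p : H) (hp : p ∈ D) (hvar : ∀ w ∈ D, ⟪x - p, w - p⟫ ≤ 0) : P x = p := by
  have h1 := hvar (P x) (hP x).1
  have h2 := proj_var_ineq hD hP x p hp
  have key : ⟪P x - p, P x - p⟫ ≤ 0 := by
    have h3 : ⟪x - p, P x - p⟫ + ⟪x - P x, p - P x⟫ ≤ 0 := add_nonpos h1 h2
    have e : ⟪x - p, P x - p⟫ + ⟪x - P x, p - P x⟫ = ⟪P x - p, P x - p⟫ := by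
      simp only [inner_sub_left, inner_sub_right]
      ring
    linarith
  have := real_inner_self_nonpos.mp key
  exact sub_eq_zero.mp this

/-- Moreau decomposition: `P_K x = x + P_L (-x)`. -/
lemma moreau (K L : Set H) (hK : IsClosedConvexCone K)
    (hL : L = dualSet K) (hKL : K = dualSet L)
    (PK PL : H → H) (hPK : IsMetricProj K PK) (hPL : IsMetricProj L PL) (x : H) :
    PK x = x + PL (-x) := by
  obtain ⟨-, hK0, hKadd, hKsmul⟩ := hK
  have hKconv : Convex ℝ K := by
    intro a ha b hb s t hs ht _
    exact hKadd _ (hKsmul a ha s hs) _ (hKsmul b hb t ht)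
  have hLconv : Convex ℝ L := hL ▸ dualSet_convex K
  set q := PL (-x) with hq
  have hqL : q ∈ L := (hPL (-x)).1
  have hvi : ∀ w ∈ L, ⟪-x - q, w - q⟫ ≤ 0 := proj_var_ineq hLconv hPL (-x)
  have h0L : (0 : H) ∈ L := hL ▸ dualSet_zero K
  have h2q : (2 : ℝ) • q ∈ L := hL ▸ dualSet_smul K (hL ▸ hqL) (by norm_num)
  have horth : ⟪-x - q, q⟫ = 0 := by
    have h1 := hvi 0 h0L
    have h2 := hvi ((2 : ℝ) • q) h2q
    rw [zero_sub, inner_neg_right] at h1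
    rw [show (2 : ℝ) • q - q = q by module] at h2
    linarith
  have hxqK : x + q ∈ K := by
    rw [hKL]
    intro w hw
    have := hvi w hw
    rw [inner_sub_right, horth] at this
    have : ⟪-x - q, w⟫ ≤ 0 := by linarith
    rw [show -x - q = -(x + q) by abel, inner_neg_left] at this
    rw [real_inner_comm]
    linarith
  refine proj_unique hKconv hPK x (x + q) hxqK ?_
  intro w hw
  have hqw : 0 ≤ ⟪q, w⟫ := by
    have : q ∈ dualSet K := hL ▸ hqL
    rw [real_inner_comm]; exact this w hw
  have hqxq : ⟪q, x + q⟫ = 0 := by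
    have : ⟪-x - q, q⟫ = -⟪q, x + q⟫ := by
      rw [show -x - q = -(x + q) by abel, inner_neg_left, real_inner_comm]
    linarith [this ▸ horth]
  rw [show x - (x + q) = -q by abel, inner_neg_left, inner_sub_right, hqxq]
  linarith

theorem PL_L_subadditive_implies_PK_L_isotone (K L : Set H) (hK : IsClosedConvexCone K)
    (hL : L = dualSet K) (hKL : K = dualSet L)
    (PK PL : H → H) (hPK : IsMetricProj K PK) (hPL : IsMetricProj L PL)
    (hsub : ∀ u v : H, PL u + PL v - PL (u + v) ∈ L) :
    ∀ x y : H, y - x ∈ L → PK y - PK x ∈ L := by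
  intro x y hyx
  have hmy := moreau K L hK hL hKL PK PL hPK hPL y
  have hmx := moreau K L hK hL hKL PK PL hPK hPL x
  -- PL fixes points of L
  have hfix : PL (y - x) = y - x := by
    have h1 := (hPL (y - x)).2 (y - x) hyx
    rw [sub_self, norm_zero] at h1
    have h0 : y - x - PL (y - x) = 0 := by rwa [← norm_le_zero_iff]
    exact (sub_eq_zero.mp h0).symm
  have key := hsub (-y) (y - x)
  rw [hfix, show -y + (y - x) = -x by abel] at key
  have : PK y - PK x = PL (-y) + (y - x) - PL (-x) := by
    rw [hmy, hmx]; abel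
  rw [this]
  exact key
end

section
/- Let K be a self-dual latticial (lattice-ordered) closed convex cone in a real Hilbert space H. Then for all x, y ∈ H, P_{x−K}(y) = x ∧ y and P_{x+K}(y) = x ∨ y, where ∧ and ∨ are the lattice infimum and supremum with respect to the order ≤_K. -/
open RealInnerProductSpace

variable {H : Type*} [NormedAddCommGroup H] [InnerProductSpace ℝ H] [CompleteSpace H]

section Aux

set_option linter.unusedSectionVars false

lemma varineq_of_proj' {D : Set H} (hcv : Convex ℝ D) {P : H → H}
    (hP : IsMetricProj D P) (y : H) : ∀ d ∈ D, ⟪y - P y, d - P y⟫ ≤ 0 := by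
  obtain ⟨hp, hmin⟩ := hP y
  have h1 : ‖y - P y‖ = ⨅ w : D, ‖y - w‖ := by
    haveI : Nonempty D := ⟨⟨P y, hp⟩⟩
    refine le_antisymm (le_ciInf fun w => hmin w w.2) ?_
    have hbd : BddBelow (Set.range fun w : D => ‖y - (w : H)‖) := by
      refine ⟨0, ?_⟩; rintro _ ⟨w, rfl⟩; exact norm_nonneg _
    exact ciInf_le hbd ⟨P y, hp⟩
  exact (norm_eq_iInf_iff_real_inner_le_zero hcv hp).mp h1

lemma proj_char' {D : Set H} (hcv : Convex ℝ D) {P : H → H}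
    (hP : IsMetricProj D P) (y : H) {q : H} (hq : q ∈ D)
    (hvar : ∀ d ∈ D, ⟪y - q, d - q⟫ ≤ 0) : P y = q := by
  have h2 := varineq_of_proj' hcv hP y q hq
  have h3 := hvar (P y) (hP y).1
  have h4 : ⟪q - P y, q - P y⟫ ≤ 0 := by
    have e1 : ⟪(y - P y) - (y - q), q - P y⟫ = ⟪y - P y, q - P y⟫ - ⟪y - q, q - P y⟫ :=
      inner_sub_left _ _ _
    have e2 : ⟪y - q, q - P y⟫ = -⟪y - q, P y - q⟫ := by
      rw [show q - P y = -(P y - q) by abel, inner_neg_right]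
    rw [show (y - P y) - (y - q) = q - P y by abel] at e1
    linarith
  have := real_inner_self_nonpos.mp h4
  rw [sub_eq_zero] at this
  exact this.symm ▸ rfl

lemma cone_convex' {K : Set H} (hK : IsClosedConvexCone K) : Convex ℝ K := by
  obtain ⟨-, -, hadd, hsmul⟩ := hK
  intro u hu v hv s t hs ht _
  exact hadd _ (hsmul u hu s hs) _ (hsmul v hv t ht)

/-- Key orthogonality lemma. -/
lemma orth_lemma {K : Set H} (hK : IsClosedConvexCone K) (hsd : K = dualSet K)
    {P : H → H} (hP : IsMetricProj K P) {a b : H} (ha : a ∈ K) (hb : b ∈ K)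
    (hub : ∀ p ∈ K, p - (a - b) ∈ K → p - a ∈ K) : ⟪a, b⟫ = 0 := by
  obtain ⟨hcl, h0, hadd, hsmul⟩ := hK
  set u := a - b with hu
  set p := P u with hpdef
  have hp : p ∈ K := (hP u).1
  have hvar := varineq_of_proj' (cone_convex' ⟨hcl, h0, hadd, hsmul⟩) hP u
  have hr : p - u ∈ K := by
    rw [hsd]
    intro k hk
    have h1 := hvar (k + p) (hadd k hk p hp)
    rw [add_sub_cancel_right] at h1
    have : ⟪k, p - u⟫ = -⟪u - p, k⟫ := by
      rw [real_inner_comm, show p - u = -(u - p) by abel, inner_neg_left]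
    linarith
  have hpr : ⟪p, p - u⟫ = 0 := by
    have h1 := hvar 0 h0
    have h2 := hvar (p + p) (hadd p hp p hp)
    rw [add_sub_cancel_right] at h2
    rw [zero_sub, inner_neg_right] at h1
    have : ⟪p, p - u⟫ = -⟪u - p, p⟫ := by
      rw [real_inner_comm, show p - u = -(u - p) by abel, inner_neg_left]
    linarith
  set w := p - a with hwdef
  have hw : w ∈ K := hub p hp hr
  have haw : 0 ≤ ⟪a, w⟫ := (hsd ▸ hw) a ha
  have hbw : 0 ≤ ⟪b, w⟫ := (hsd ▸ hw) b hb
  have hab : 0 ≤ ⟪a, b⟫ := (hsd ▸ hb) a ha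
  have hkey : ⟪a + w, b + w⟫ = 0 := by
    rw [show a + w = p by rw [hwdef]; abel, show b + w = p - u by rw [hwdef, hu]; abel]
    exact hpr
  have hexp : ⟪a, b⟫ + ⟪a, w⟫ + ⟪w, b⟫ + ⟪w, w⟫ = 0 := by
    rw [inner_add_left, inner_add_right, inner_add_right] at hkey
    linarith
  have hww : (0:ℝ) ≤ ⟪w, w⟫ := real_inner_self_nonneg
  have hwb : ⟪w, b⟫ = ⟪b, w⟫ := real_inner_comm _ _
  linarith

lemma meetSet_eq' (K : Set H) (x : H) : meetSet K x = (fun z => x - z) ⁻¹' K := by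
  ext z
  constructor
  · rintro ⟨k, hk, rfl⟩
    simpa using hk
  · intro hz
    exact ⟨x - z, hz, by abel⟩

lemma joinSet_eq' (K : Set H) (x : H) : joinSet K x = (fun z => z - x) ⁻¹' K := by
  ext z
  constructor
  · rintro ⟨k, hk, rfl⟩
    simpa using hk
  · intro hz
    exact ⟨z - x, hz, by abel⟩

end Aux

theorem selfDual_latticial_proj_eq_lattice_ops (K : Set H) (hK : IsClosedConvexCone K)
    (hsd : K = dualSet K)
    (inf sup : H → H → H)
    (hinf : ∀ x y : H, x - inf x y ∈ K ∧ y - inf x y ∈ K ∧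
      ∀ z : H, x - z ∈ K → y - z ∈ K → inf x y - z ∈ K)
    (hsup : ∀ x y : H, sup x y - x ∈ K ∧ sup x y - y ∈ K ∧
      ∀ z : H, z - x ∈ K → z - y ∈ K → z - sup x y ∈ K)
    (P : Set H → H → H)
    (hP : ∀ D : Set H, D.Nonempty → IsClosed D → Convex ℝ D → IsMetricProj D (P D)) :
    ∀ x y : H, P (meetSet K x) y = inf x y ∧ P (joinSet K x) y = sup x y := by
  obtain ⟨hcl, h0, hadd, hsmul⟩ := hK
  have hK' : IsClosedConvexCone K := ⟨hcl, h0, hadd, hsmul⟩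
  have hKcv := cone_convex' hK'
  have hPK : IsMetricProj K (P K) := hP K ⟨0, h0⟩ hcl hKcv
  intro x y
  constructor
  · -- meet
    obtain ⟨ha, hb, h3⟩ := hinf x y
    set q := inf x y
    have horth : ⟪x - q, y - q⟫ = 0 := by
      refine orth_lemma hK' hsd hPK ha hb ?_
      intro p hp hpu
      have e1 : x - (q + (x - q) - p) = p := by abel
      have e2 : y - (q + (x - q) - p) = p - ((x - q) - (y - q)) := by abel
      have := h3 (q + (x - q) - p) (by rw [e1]; exact hp) (by rw [e2]; exact hpu)
      rwa [show q - (q + (x - q) - p) = p - (x - q) by abel] at this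
    have hDcl : IsClosed (meetSet K x) := by
      rw [meetSet_eq']
      exact hcl.preimage (continuous_const.sub continuous_id)
    have hDcv : Convex ℝ (meetSet K x) := by
      rw [meetSet_eq']
      intro z1 hz1 z2 hz2 s t hs ht hst
      simp only [Set.mem_preimage] at *
      have : x - (s • z1 + t • z2) = s • (x - z1) + t • (x - z2) := by
        rw [smul_sub, smul_sub,
          show s • x - s • z1 + (t • x - t • z2) = (s • x + t • x) - (s • z1 + t • z2) by abel,
          ← add_smul, hst, one_smul]
      rw [this]
      exact hadd _ (hsmul _ hz1 s hs) _ (hsmul _ hz2 t ht)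
    have hDne : (meetSet K x).Nonempty := ⟨x, 0, h0, by abel⟩
    refine proj_char' hDcv (hP _ hDne hDcl hDcv) y ⟨x - q, ha, by abel⟩ ?_
    rintro d ⟨k, hk, rfl⟩
    have e : ⟪y - q, x - k - q⟫ = ⟪y - q, x - q⟫ - ⟪y - q, k⟫ := by
      rw [show x - k - q = (x - q) - k by abel, inner_sub_right]
    have hc1 : ⟪y - q, x - q⟫ = ⟪x - q, y - q⟫ := real_inner_comm _ _
    have hc2 : ⟪y - q, k⟫ = ⟪k, y - q⟫ := real_inner_comm _ _
    have hkb : 0 ≤ ⟪k, y - q⟫ := (hsd ▸ hb) k hk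
    linarith [e, horth]
  · -- join
    obtain ⟨ha, hb, h3⟩ := hsup x y
    set s := sup x y
    have horth : ⟪s - x, s - y⟫ = 0 := by
      refine orth_lemma hK' hsd hPK ha hb ?_
      intro p hp hpu
      have e1 : (x + p) - x = p := by abel
      have e2 : (x + p) - y = p - ((s - x) - (s - y)) := by abel
      have := h3 (x + p) (by rw [e1]; exact hp) (by rw [e2]; exact hpu)
      rwa [show (x + p) - s = p - (s - x) by abel] at this
    have hDcl : IsClosed (joinSet K x) := by
      rw [joinSet_eq']
      exact hcl.preimage (continuous_id.sub continuous_const)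
    have hDcv : Convex ℝ (joinSet K x) := by
      rw [joinSet_eq']
      intro z1 hz1 z2 hz2 u t hu ht hut
      simp only [Set.mem_preimage] at *
      have : (u • z1 + t • z2) - x = u • (z1 - x) + t • (z2 - x) := by
        rw [smul_sub, smul_sub,
          show u • z1 - u • x + (t • z2 - t • x) = (u • z1 + t • z2) - (u • x + t • x) by abel,
          ← add_smul, hut, one_smul]
      rw [this]
      exact hadd _ (hsmul _ hz1 u hu) _ (hsmul _ hz2 t ht)
    have hDne : (joinSet K x).Nonempty := ⟨x, 0, h0, by abel⟩
    refine proj_char' hDcv (hP _ hDne hDcl hDcv) y ⟨s - x, ha, by abel⟩ ?_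
    rintro d ⟨k, hk, rfl⟩
    have e : ⟪y - s, x + k - s⟫ = -⟪s - y, k - (s - x)⟫ := by
      rw [show x + k - s = k - (s - x) by abel, show y - s = -(s - y) by abel, inner_neg_left]
    have e2 : ⟪s - y, k - (s - x)⟫ = ⟪s - y, k⟫ - ⟪s - y, s - x⟫ := inner_sub_right _ _ _
    have hc1 : ⟪s - y, s - x⟫ = ⟪s - x, s - y⟫ := real_inner_comm _ _
    have hc2 : ⟪s - y, k⟫ = ⟪k, s - y⟫ := real_inner_comm _ _
    have hkb : 0 ≤ ⟪k, s - y⟫ := (hsd ▸ hb) k hk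
    linarith [e, e2, horth]
end
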